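/- Let Ψ(x, y) denote the number of positive integers n ≤ x all of whose prime factors are ≤ y. If y = exp(log x / log log x), then for every constant A > 0 one has Ψ(x, y) = O(x/(log x)^A) as x → ∞. -/

import Mathlib

/-!
Rankin's method. For `0 < σ` every `n ≤ x` satisfies `1 ≤ (x / n) ^ σ`, so by the Euler
product the number of `y`-smooth `n ≤ x` is at most `x ^ σ ∏_{p ≤ y} (1 - p ^ (-σ))⁻¹`.
With `log y = log x / log log x` and `σ = 1 - c / log y` we get `x ^ σ = x (log x) ^ (-c)`,
while `p ^ (-σ) ≤ 1 / p + O_c(log p / (p log y))` and the elementary Mertens-type bounds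
`∑_{p ≤ y} log p / p ≤ log y + O(1)` and `∑_{p ≤ y} 1 / p = O(log log x)` (both from
Chebyshev's `θ(t) ≤ t log 4`) show that the product is only `(log x) ^ O(1)`.
-/

open Nat hiding log
open Filter Finset Real Chebyshev Topology

theorem sum_primesBelow_log_le (N : ℕ) : ∑ p ∈ N.primesBelow, log p ≤ log 4 * N :=
  calc ∑ p ∈ N.primesBelow, log p ≤ ∑ p ∈ N.primesLE, log p :=
        sum_le_sum_of_subset_of_nonneg (primesBelow_mono N.le_succ)
          fun _ _ _ ↦ Real.log_natCast_nonneg _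
    _ = θ N := (theta_eq_sum_primesLE_log N).symm
    _ ≤ log 4 * N := theta_le_log4_mul_x N.cast_nonneg

theorem Nat.Prime.pow_div_dvd_factorial {p : ℕ} (hp : p.Prime) (N : ℕ) :
    p ^ (N / p) ∣ N ! := by
  have : p ^ (N / p) ∣ (p * (N / p))! := by
    rw [hp.pow_dvd_iff_le_factorization (factorial_ne_zero _), factorization_factorial_mul hp]
    omega
  exact this.trans (factorial_dvd_factorial (Nat.mul_div_le N p))

theorem prod_primesBelow_pow_div_dvd_factorial (N : ℕ) :
    ∏ p ∈ N.primesBelow, p ^ (N / p) ∣ N ! := by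
  rw [← Int.natCast_dvd_natCast, Nat.cast_prod]
  refine Finset.prod_dvd_of_coprime (fun p hp q hq hpq ↦ ?_) fun p hp ↦ ?_
  · have := (coprime_primes (prime_of_mem_primesBelow hp) (prime_of_mem_primesBelow hq)).2 hpq
    exact Nat.isCoprime_iff_coprime.2 (this.pow (N / p) (N / q))
  · exact Int.natCast_dvd_natCast.2 ((prime_of_mem_primesBelow hp).pow_div_dvd_factorial N)

theorem sum_primesBelow_div_mul_log_le (N : ℕ) :
    ∑ p ∈ N.primesBelow, ((N / p : ℕ) : ℝ) * log p ≤ N * log N := by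
  have hpos : ∀ p ∈ N.primesBelow, (0 : ℝ) < p ^ (N / p) := fun p hp ↦
    pow_pos (mod_cast (prime_of_mem_primesBelow hp).pos) _
  calc ∑ p ∈ N.primesBelow, ((N / p : ℕ) : ℝ) * log p
      = log (∏ p ∈ N.primesBelow, (p : ℝ) ^ (N / p)) := by
        rw [Real.log_prod fun p hp ↦ (hpos p hp).ne']
        simp only [Real.log_pow]
    _ ≤ log (N ! : ℕ) := by
        refine Real.log_le_log (prod_pos hpos) ?_
        exact_mod_cast Nat.le_of_dvd N.factorial_pos (prod_primesBelow_pow_div_dvd_factorial N)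
    _ ≤ log ((N : ℝ) ^ N) :=
        Real.log_le_log (mod_cast N.factorial_pos) (mod_cast N.factorial_le_pow)
    _ = N * log N := Real.log_pow N N

/-- Mertens' first theorem, as an upper bound. -/
theorem sum_primesBelow_log_div_le (N : ℕ) :
    ∑ p ∈ N.primesBelow, log p / p ≤ log N + log 4 := by
  rcases N.eq_zero_or_pos with rfl | hN
  · simp [Real.log_nonneg]
  have hN' : (0 : ℝ) < N := mod_cast hN
  have hterm : ∀ p ∈ N.primesBelow,
      N * (log p / p) ≤ ((N / p : ℕ) : ℝ) * log p + log p := by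
    intro p hp
    have hp0 : (0 : ℝ) < p := mod_cast (prime_of_mem_primesBelow hp).pos
    have hdiv : (N : ℝ) / p ≤ (N / p : ℕ) + 1 := by
      rw [div_le_iff₀ hp0]
      have : N ≤ (N / p + 1) * p := by
        rw [add_mul, one_mul]; exact (Nat.lt_div_mul_add (prime_of_mem_primesBelow hp).pos).le
      exact_mod_cast this
    calc N * (log p / p) = N / p * log p := by ring
      _ ≤ ((N / p : ℕ) + 1) * log p :=
          mul_le_mul_of_nonneg_right hdiv (Real.log_natCast_nonneg p)
      _ = _ := by ring
  refine le_of_mul_le_mul_left ?_ hN'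
  calc N * ∑ p ∈ N.primesBelow, log p / p
      ≤ ∑ p ∈ N.primesBelow, (((N / p : ℕ) : ℝ) * log p + log p) := by
        rw [mul_sum]; exact sum_le_sum hterm
    _ ≤ N * log N + log 4 * N := by
        rw [sum_add_distrib]
        exact add_le_add (sum_primesBelow_div_mul_log_le N) (sum_primesBelow_log_le N)
    _ = N * (log N + log 4) := by ring

theorem sum_primesBelow_filter_inv_le {M : ℕ} (hM : 1 < M) (N : ℕ) :
    ∑ p ∈ N.primesBelow with M ≤ p, (1 : ℝ) / p ≤ (log N + log 4) / log M := by
  have hlogM : 0 < log M := Real.log_pos (mod_cast hM)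
  have hlog_div_nonneg : ∀ p ∈ N.primesBelow, 0 ≤ log p / p := fun p _ ↦ by positivity
  rw [le_div_iff₀ hlogM, sum_mul]
  calc ∑ p ∈ N.primesBelow with M ≤ p, (1 : ℝ) / p * log M
      ≤ ∑ p ∈ N.primesBelow with M ≤ p, log p / p := by
        refine sum_le_sum fun p hp ↦ ?_
        rw [mem_filter] at hp
        rw [one_div_mul_eq_div]
        gcongr
        exact_mod_cast hp.2
    _ ≤ ∑ p ∈ N.primesBelow, log p / p :=
        sum_le_sum_of_subset_of_nonneg (filter_subset _ _) fun p hp _ ↦ hlog_div_nonneg p hp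
    _ ≤ log N + log 4 := sum_primesBelow_log_div_le N

theorem sum_primesBelow_inv_le_of_le_two_pow_two_pow {k N : ℕ} (hN : N ≤ 2 ^ 2 ^ k) :
    ∑ p ∈ N.primesBelow, (1 : ℝ) / p ≤ 4 * k := by
  induction k generalizing N with
  | zero =>
    have : N.primesBelow = ∅ :=
      eq_empty_of_forall_notMem fun p hp ↦ by
        have := (prime_of_mem_primesBelow hp).two_le
        have := lt_of_mem_primesBelow hp
        rw [pow_zero, pow_one] at hN
        omega
    simp [this]
  | succ k ih =>
    set M := 2 ^ 2 ^ k
    have hM : 1 < M := Nat.one_lt_two_pow (pow_ne_zero k two_ne_zero)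
    have hlogM : 0 < log M := Real.log_pos (mod_cast hM)
    have hsmall : ∑ p ∈ N.primesBelow with p < M, (1 : ℝ) / p ≤ 4 * k :=
      calc ∑ p ∈ N.primesBelow with p < M, (1 : ℝ) / p
          ≤ ∑ p ∈ M.primesBelow, (1 : ℝ) / p := by
            refine sum_le_sum_of_subset_of_nonneg (fun p hp ↦ ?_) fun _ _ _ ↦ by positivity
            simp only [mem_filter, mem_primesBelow] at hp ⊢
            exact ⟨hp.2, hp.1.2⟩
        _ ≤ 4 * k := ih le_rfl
    have hlogN : log N ≤ 2 * log M := by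
      rcases N.eq_zero_or_pos with rfl | hN0
      · simp [hlogM.le]
      rw [pow_succ, pow_mul] at hN
      calc log N ≤ log ((M : ℝ) ^ 2) := Real.log_le_log (mod_cast hN0) (mod_cast hN)
        _ = 2 * log M := by rw [Real.log_pow]; norm_num
    have hlog4 : log 4 ≤ 2 * log M := by
      calc log 4 = 2 * log 2 := by
            rw [show (4 : ℝ) = 2 ^ 2 by norm_num, Real.log_pow]; norm_num
        _ ≤ 2 * log M := by gcongr; exact_mod_cast hM
    have hlarge : ∑ p ∈ N.primesBelow with ¬ p < M, (1 : ℝ) / p ≤ 4 := by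
      simp only [not_lt]
      refine (sum_primesBelow_filter_inv_le hM N).trans ?_
      rw [div_le_iff₀ hlogM]
      linarith
    rw [← sum_filter_add_sum_filter_not _ (· < M)]
    push_cast
    linarith

theorem sum_primesBelow_inv_le_log_log {N : ℕ} {x : ℝ} (hx : 1 ≤ log x) (hN : N ≤ x) :
    ∑ p ∈ N.primesBelow, (1 : ℝ) / p ≤ 6 * log (log x) + 8 := by
  have hlog2 := Real.log_two_gt_d9
  have hx0 : 0 < x := (N.cast_nonneg.trans hN).lt_of_ne fun h ↦ by norm_num [← h] at hx
  have hL : 0 ≤ logb 2 (log x) := logb_nonneg one_lt_two hx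
  set k := ⌈logb 2 (log x)⌉₊ + 1
  have hk : log x ≤ 2 ^ k * log 2 := by
    have : log x ≤ 2 ^ ⌈logb 2 (log x)⌉₊ := by
      calc log x = 2 ^ logb 2 (log x) :=
            (rpow_logb two_pos (by norm_num) (by linarith)).symm
        _ ≤ 2 ^ (⌈logb 2 (log x)⌉₊ : ℝ) :=
            rpow_le_rpow_of_exponent_le one_le_two (Nat.le_ceil _)
        _ = _ := rpow_natCast _ _
    rw [pow_succ]
    nlinarith
  have hNk : N ≤ 2 ^ 2 ^ k := by
    have : x ≤ 2 ^ 2 ^ k := by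
      calc x = exp (log x) := (exp_log hx0).symm
        _ ≤ exp (2 ^ k * log 2) := exp_le_exp.2 hk
        _ = 2 ^ 2 ^ k := by
            rw [← exp_log (show (0 : ℝ) < 2 ^ 2 ^ k by positivity), Real.log_pow]
            push_cast; rfl
    exact_mod_cast hN.trans this
  have hk' : (k : ℝ) ≤ log (log x) / log 2 + 2 := by
    have := Nat.ceil_lt_add_one hL
    simp only [k, Nat.cast_add, Nat.cast_one, logb] at this ⊢
    linarith
  have hLL : 0 ≤ log (log x) := Real.log_nonneg hx
  have : 4 * (log (log x) / log 2) ≤ 6 * log (log x) := by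
    rw [← mul_div_assoc, div_le_iff₀ (by linarith)]
    nlinarith
  calc ∑ p ∈ N.primesBelow, (1 : ℝ) / p ≤ 4 * k :=
        sum_primesBelow_inv_le_of_le_two_pow_two_pow hNk
    _ ≤ 6 * log (log x) + 8 := by linarith

noncomputable def natRpowNeg (σ : ℝ) : ℕ →* ℝ where
  toFun n := (n : ℝ) ^ (-σ)
  map_one' := by simp
  map_mul' m n := by push_cast; exact mul_rpow m.cast_nonneg n.cast_nonneg

theorem sum_le_prod_primesBelow_geometric {f : ℕ →* ℝ} (hf0 : ∀ n, 0 ≤ f n)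
    (hf1 : ∀ p, p.Prime → f p < 1) {N : ℕ} {S : Finset ℕ} (hS : ↑S ⊆ N.smoothNumbers) :
    ∑ n ∈ S, f n ≤ ∏ p ∈ N.primesBelow, (1 - f p)⁻¹ := by
  have hnorm : ∀ {p : ℕ}, p.Prime → ‖f p‖ < 1 := fun hp ↦ by
    rw [norm_of_nonneg (hf0 _)]; exact hf1 _ hp
  have hsum := hasSum_subtype_iff_indicator.mp
    (EulerProduct.summable_and_hasSum_smoothNumbers_prod_primesBelow_geometric hnorm N).2
  calc ∑ n ∈ S, f n = ∑ n ∈ S, N.smoothNumbers.indicator f n :=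
        sum_congr rfl fun n hn ↦ (Set.indicator_of_mem (hS hn) f).symm
    _ ≤ _ := sum_le_hasSum S (fun n _ ↦ Set.indicator_nonneg (fun n _ ↦ hf0 n) n) hsum

theorem card_smoothNumbersUpTo_le {σ : ℝ} (hσ : 0 < σ) (x N : ℕ) :
    (#(smoothNumbersUpTo x N) : ℝ) ≤
      x ^ σ * ∏ p ∈ N.primesBelow, (1 - (p : ℝ) ^ (-σ))⁻¹ := by
  have hterm : ∀ n ∈ smoothNumbersUpTo x N, (1 : ℝ) ≤ x ^ σ * (n : ℝ) ^ (-σ) := by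
    intro n hn
    obtain ⟨hnx, hn⟩ := mem_smoothNumbersUpTo.1 hn
    have hn0 : (0 : ℝ) < n := mod_cast Nat.pos_of_ne_zero (ne_zero_of_mem_smoothNumbers hn)
    rw [rpow_neg hn0.le, ← div_eq_mul_inv, one_le_div (by positivity)]
    exact rpow_le_rpow hn0.le (mod_cast hnx) hσ.le
  calc (#(smoothNumbersUpTo x N) : ℝ)
      ≤ ∑ n ∈ smoothNumbersUpTo x N, x ^ σ * (n : ℝ) ^ (-σ) := by
        simpa using sum_le_sum hterm
    _ = x ^ σ * ∑ n ∈ smoothNumbersUpTo x N, natRpowNeg σ n := (mul_sum ..).symm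
    _ ≤ x ^ σ * ∏ p ∈ N.primesBelow, (1 - natRpowNeg σ p)⁻¹ := by
        gcongr
        exact sum_le_prod_primesBelow_geometric (fun n ↦ rpow_nonneg n.cast_nonneg _)
          (fun p hp ↦ rpow_lt_one_of_one_lt_of_neg (mod_cast hp.one_lt) (neg_neg_of_pos hσ))
          fun n hn ↦ (mem_smoothNumbersUpTo.1 hn).2

theorem inv_one_sub_le_exp_four_mul {t : ℝ} (ht0 : 0 ≤ t) (ht : t ≤ 3 / 4) :
    (1 - t)⁻¹ ≤ exp (4 * t) := by
  rw [inv_le_iff_one_le_mul₀ (by linarith)]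
  -- `(1 - t) (1 + 4 t) = 1 + t (3 - 4 t)`
  nlinarith [add_one_le_exp (4 * t)]

theorem Nat.Prime.rpow_neg_le_three_quarters {p : ℕ} (hp : p.Prime) {σ : ℝ}
    (hσ : 1 / 2 ≤ σ) :
    (p : ℝ) ^ (-σ) ≤ 3 / 4 := by
  have h2 : (2 : ℝ) ≤ p := mod_cast hp.two_le
  calc (p : ℝ) ^ (-σ) ≤ 2 ^ (-σ) := rpow_le_rpow_of_nonpos two_pos h2 (by linarith)
    _ ≤ 2 ^ (-(1 / 2) : ℝ) := rpow_le_rpow_of_exponent_le one_le_two (by linarith)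
    _ ≤ 3 / 4 := by
        rw [rpow_neg two_pos.le, ← sqrt_eq_rpow, inv_le_comm₀ (by positivity) (by norm_num),
          Real.le_sqrt (by norm_num) (by norm_num)]
        norm_num

theorem card_smoothNumbersUpTo_le_exp {σ : ℝ} (hσ : 1 / 2 ≤ σ) (x N : ℕ) :
    (#(smoothNumbersUpTo x N) : ℝ) ≤
      x ^ σ * exp (4 * ∑ p ∈ N.primesBelow, (p : ℝ) ^ (-σ)) := by
  refine (card_smoothNumbersUpTo_le (by linarith) x N).trans ?_
  rw [mul_sum, exp_sum]
  refine mul_le_mul_of_nonneg_left (prod_le_prod (fun p hp ↦ ?_) fun p hp ↦ ?_) (by positivity)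
  · have := (prime_of_mem_primesBelow hp).rpow_neg_le_three_quarters hσ
    exact inv_nonneg.2 (by linarith)
  · exact inv_one_sub_le_exp_four_mul (rpow_nonneg p.cast_nonneg _)
      ((prime_of_mem_primesBelow hp).rpow_neg_le_three_quarters hσ)

theorem exp_le_one_add_mul_exp {s c : ℝ} (hs : 0 ≤ s) (hsc : s ≤ c) :
    exp s ≤ 1 + s * exp c := by
  have : exp s * (1 - s) ≤ 1 := by
    have hinv : exp s * exp (-s) = 1 := by rw [← exp_add, add_neg_cancel, exp_zero]
    nlinarith [add_one_le_exp (-s), exp_pos s]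
  nlinarith [exp_le_exp.2 hsc]

theorem rpow_neg_one_sub_div_le {p c u : ℝ} (hp : 1 ≤ p) (hc : 0 ≤ c) (hu : 0 < u)
    (hpu : log p ≤ u) :
    p ^ (-(1 - c / u)) ≤ 1 / p + c * exp c / u * (log p / p) := by
  have hp0 : 0 < p := by linarith
  have hs0 : 0 ≤ c / u * log p := mul_nonneg (div_nonneg hc hu.le) (Real.log_nonneg hp)
  have hsc : c / u * log p ≤ c := by
    rw [div_mul_eq_mul_div, div_le_iff₀ hu]; exact mul_le_mul_of_nonneg_left hpu hc
  calc p ^ (-(1 - c / u)) = exp (c / u * log p) / p := by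
        rw [rpow_def_of_pos hp0, show log p * -(1 - c / u) = c / u * log p - log p by ring,
          exp_sub, exp_log hp0]
    _ ≤ (1 + c / u * log p * exp c) / p := by gcongr; exact exp_le_one_add_mul_exp hs0 hsc
    _ = 1 / p + c * exp c / u * (log p / p) := by ring

theorem sum_primesBelow_rpow_neg_le {c u : ℝ} (hc : 0 ≤ c) (hu : 3 ≤ u) :
    ∑ p ∈ (⌊exp u⌋₊ + 1).primesBelow, (p : ℝ) ^ (-(1 - c / u)) ≤
      ∑ p ∈ (⌊exp u⌋₊ + 1).primesBelow, (1 : ℝ) / p + 2 * c * exp c := by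
  set N := ⌊exp u⌋₊ + 1
  have hlog2 := Real.log_two_lt_d9
  have hN : log N ≤ u + log 2 := by
    have hN : (N : ℝ) ≤ 2 * exp u := by
      have := Nat.floor_le (exp_pos u).le
      have := add_one_le_exp u
      push_cast [N]
      linarith
    calc log N ≤ log (2 * exp u) := Real.log_le_log (by positivity) hN
      _ = u + log 2 := by
          rw [Real.log_mul two_ne_zero (exp_pos u).ne', Real.log_exp, add_comm]
  have hlog4 : log 4 = 2 * log 2 := by
    rw [show (4 : ℝ) = 2 ^ 2 by norm_num, Real.log_pow]; norm_num
  calc ∑ p ∈ N.primesBelow, (p : ℝ) ^ (-(1 - c / u))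
      ≤ ∑ p ∈ N.primesBelow, ((1 : ℝ) / p + c * exp c / u * (log p / p)) := by
        refine sum_le_sum fun p hp ↦ rpow_neg_one_sub_div_le
          (mod_cast (prime_of_mem_primesBelow hp).one_lt.le) hc (by linarith) ?_
        rw [← Real.log_exp u]
        refine Real.log_le_log (mod_cast (prime_of_mem_primesBelow hp).pos) ?_
        exact (Nat.le_floor_iff (exp_pos u).le).1 (Nat.lt_succ_iff.1 (lt_of_mem_primesBelow hp))
    _ = ∑ p ∈ N.primesBelow, (1 : ℝ) / p
          + c * exp c / u * ∑ p ∈ N.primesBelow, log p / p := by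
        rw [sum_add_distrib, mul_sum]
    _ ≤ ∑ p ∈ N.primesBelow, (1 : ℝ) / p + c * exp c / u * (u + 3 * log 2) := by
        gcongr
        linarith [sum_primesBelow_log_div_le N]
    _ ≤ ∑ p ∈ N.primesBelow, (1 : ℝ) / p + 2 * c * exp c := by
        have : c * exp c / u * (u + 3 * log 2) ≤ 2 * c * exp c := by
          rw [div_mul_eq_mul_div, div_le_iff₀ (by linarith)]
          nlinarith [mul_nonneg hc (exp_pos c).le]
        linarith

theorem filter_primeFactors_le_subset_smoothNumbersUpTo (x : ℕ) (y : ℝ) :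
    (Icc 1 x).filter (fun n : ℕ ↦ ∀ p ∈ n.primeFactors, (p : ℝ) ≤ y) ⊆
      smoothNumbersUpTo x (⌊y⌋₊ + 1) := by
  intro n hn
  simp only [mem_filter, mem_Icc] at hn
  refine mem_smoothNumbersUpTo.2
    ⟨hn.1.2, mem_smoothNumbers_of_primeFactors_subset (by omega) fun p hp ↦ ?_⟩
  exact mem_range.2 (Nat.lt_succ_of_le (Nat.le_floor (hn.2 p hp)))

theorem card_smooth_le_mul_div_log_rpow {A x : ℝ} (hA : 0 ≤ A) (hx : 0 < x)
    (hLL : 2 ≤ log (log x)) (hu : 2 * (A + 24) ≤ log x / log (log x)) :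
    (#((Icc 1 ⌊x⌋₊).filter fun n : ℕ ↦ ∀ p ∈ n.primeFactors,
        (p : ℝ) ≤ exp (log x / log (log x))) : ℝ) ≤
      exp (32 + 8 * (A + 24) * exp (A + 24)) * (x / log x ^ A) := by
  set L := log x
  set LL := log L
  set u := L / LL
  -- `24 = 4 · 6` absorbs the factor `exp (4 · 6 log log x)` that `∑ 1 / p` puts into the
  -- Euler product.
  set c := A + 24
  set σ := 1 - c / u
  set N := ⌊exp u⌋₊ + 1
  have hu0 : 0 < u := by linarith
  have hL : exp 2 ≤ L := by
    have hL0 : 0 < L := (div_pos_iff_of_pos_right (by linarith)).1 hu0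
    rw [← exp_log hL0]; exact exp_le_exp.2 hLL
  have hL3 : 3 ≤ L := by linarith [add_one_le_exp 2]
  have hσ : 1 / 2 ≤ σ := by
    have : c / u ≤ 1 / 2 := by rw [div_le_iff₀ hu0]; linarith
    linarith
  have hNx : (N : ℝ) ≤ x := by
    have hu1 : u + 1 ≤ L := by
      have : u ≤ L / 2 := div_le_div_of_nonneg_left (by linarith) two_pos hLL
      linarith
    calc (N : ℝ) ≤ exp u + 1 := by push_cast [N]; linarith [Nat.floor_le (exp_pos u).le]
      _ ≤ exp (u + 1) := by rw [exp_add]; nlinarith [add_one_le_exp 1, one_le_exp hu0.le]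
      _ ≤ x := (exp_le_exp.2 hu1).trans (exp_log hx).le
  have hprimes : ∑ p ∈ N.primesBelow, (p : ℝ) ^ (-σ) ≤ 6 * LL + 8 + 2 * c * exp c :=
    (sum_primesBelow_rpow_neg_le (by positivity) (by linarith)).trans
      (by linarith [sum_primesBelow_inv_le_log_log (by linarith) hNx])
  have hxσ : x ^ σ = x * exp (-(c * LL)) := by
    rw [rpow_def_of_pos hx, show L * σ = L + -(c * LL) by simp only [σ, u]; field_simp; ring,
      exp_add, exp_log hx]
  have hLA : L ^ A = exp (A * LL) := by rw [rpow_def_of_pos (by linarith), mul_comm]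
  calc _ ≤ (#(smoothNumbersUpTo ⌊x⌋₊ N) : ℝ) :=
        mod_cast card_le_card (filter_primeFactors_le_subset_smoothNumbersUpTo ⌊x⌋₊ (exp u))
    _ ≤ ⌊x⌋₊ ^ σ * exp (4 * ∑ p ∈ N.primesBelow, (p : ℝ) ^ (-σ)) :=
        card_smoothNumbersUpTo_le_exp hσ ⌊x⌋₊ N
    _ ≤ x ^ σ * exp (4 * (6 * LL + 8 + 2 * c * exp c)) := by
        gcongr
        exact Nat.floor_le hx.le
    _ = exp (32 + 8 * c * exp c) * (x / L ^ A) := by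
        rw [hxσ, hLA, div_eq_mul_inv, ← exp_neg, mul_assoc, ← exp_add, mul_left_comm,
          ← exp_add]
        congr 2
        ring

theorem tendsto_div_log_atTop : Tendsto (fun t ↦ t / log t) atTop atTop := by
  have h : Tendsto (fun t ↦ log t / t) atTop (𝓝[>] 0) :=
    tendsto_nhdsWithin_iff.2 ⟨isLittleO_log_id_atTop.tendsto_div_nhds_zero,
      by filter_upwards [eventually_gt_atTop 1] with t ht
           using div_pos (log_pos ht) (by linarith)⟩
  simpa only [Pi.inv_def, inv_div] using h.inv_tendsto_nhdsGT_zero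

/-- With `y = exp(log x / log log x)`, the number `Ψ(x, y)` of positive integers `n ≤ x`
all of whose prime factors are `≤ y` satisfies `Ψ(x, y) = O(x/(log x)^A)` for every
`A > 0`. -/
theorem smooth_numbers_count_negligible (A : ℝ) (hA : 0 < A) :
    (fun x : ℝ =>
        (((Finset.Icc 1 ⌊x⌋₊).filter
            (fun n : ℕ => ∀ p ∈ n.primeFactors,
              (p : ℝ) ≤ Real.exp (Real.log x / Real.log (Real.log x)))).card : ℝ))
      =O[atTop] (fun x : ℝ => x / Real.log x ^ A) := by
  refine Asymptotics.isBigO_iff.2 ⟨exp (32 + 8 * (A + 24) * exp (A + 24)), ?_⟩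
  filter_upwards [eventually_gt_atTop 0,
    (tendsto_log_atTop.comp tendsto_log_atTop).eventually_ge_atTop 2,
    (tendsto_div_log_atTop.comp tendsto_log_atTop).eventually_ge_atTop (2 * (A + 24))]
    with x hx hLL hu
  rw [Real.norm_natCast]
  exact (card_smooth_le_mul_div_log_rpow hA.le hx hLL hu).trans
    (mul_le_mul_of_nonneg_left (le_norm_self _) (exp_pos _).le)
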